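/- arXiv:2410.07942 — 10 statements merged into one kernel-verified Lean document; each statement's English description precedes it below -/
import Mathlib

section
/- Let F be a field in which the squaring map x ↦ x² is not surjective (an NRC field). Let M be a linear subspace of the n×n matrices over F (n ≥ 2) in which every matrix is triangularizable over F (i.e., similar over F to an upper triangular matrix). If A and B are matrices in M with rank A ≤ 1, rank B ≤ 1, trace A = 0 and trace B = 0, then trace(AB) = 0. -/
/-- A square matrix is triangularizable over the ground field when it is
similar over that field to an upper triangular matrix. -/
def Matrix.Triangularizable {n : ℕ} {F : Type*} [Field F]
    (M : Matrix (Fin n) (Fin n) F) : Prop :=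
  ∃ P : (Matrix (Fin n) (Fin n) F)ˣ,
    ((P : Matrix (Fin n) (Fin n) F) * M * ((P⁻¹ : (Matrix (Fin n) (Fin n) F)ˣ) :
      Matrix (Fin n) (Fin n) F)).BlockTriangular id

/-!
Suppose `t = tr(AB) ≠ 0` and let `x` be a non-square. A rank-one matrix `X` is `u vᵀ`, so
`X Y X = tr(XY) X`; with zero traces this gives `A² = B² = 0`, `ABA = tA`, `BAB = tB`, and
hence `C = A + (x/t) B ∈ M` satisfies `C³ = x C`. Conjugate `C` to an upper triangular `D`:
each diagonal entry `d` has `d³ = x d`, so `d = 0` as `x` is not a square. Then `D` is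
nilpotent, and `D^(2k+1) = x^k D` forces `D = 0`. So `A = -(x/t) B` and
`t = -(x/t) tr(B²) = 0`, a contradiction.
-/

namespace Matrix

section RankOne

variable {l m R K : Type*} [Fintype m]

theorem exists_eq_vecMulVec_of_rank_le_one [Field K] {A : Matrix l m K} (h : A.rank ≤ 1) :
    ∃ (u : l → K) (v : m → K), A = vecMulVec u v := by
  classical
  have hrange : Module.finrank K (LinearMap.range A.mulVecLin) ≤ 1 := h
  obtain ⟨u, hu⟩ := finrank_le_one_iff.mp hrange
  choose v hv using fun j => hu ⟨A.mulVecLin (Pi.single j 1), LinearMap.mem_range_self _ _⟩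
  refine ⟨u, v, ext fun i j => ?_⟩
  have hcol := congrFun (congrArg Subtype.val (hv j)) i
  simp only [SetLike.val_smul, Pi.smul_apply, smul_eq_mul, mulVecLin_apply, mulVec_single,
    MulOpposite.op_one, one_smul, col_apply] at hcol
  rw [← hcol, vecMulVec_apply, mul_comm]

theorem vecMulVec_mul_mul_vecMulVec [CommRing R] (u v : m → R) (Y : Matrix m m R) :
    vecMulVec u v * Y * vecMulVec u v = (vecMulVec u v * Y).trace • vecMulVec u v := by
  rw [vecMulVec_mul, vecMulVec_mul_vecMulVec, trace_vecMulVec, vecMulVec_smul, dotProduct_comm]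

theorem mul_mul_self_eq_trace_smul_of_rank_le_one [Field K] {A : Matrix m m K}
    (h : A.rank ≤ 1) (Y : Matrix m m K) : A * Y * A = (A * Y).trace • A := by
  obtain ⟨u, v, rfl⟩ := exists_eq_vecMulVec_of_rank_le_one h
  exact vecMulVec_mul_mul_vecMulVec u v Y

theorem mul_self_eq_zero_of_rank_le_one [Field K] {A : Matrix m m K} (h : A.rank ≤ 1)
    (ht : A.trace = 0) : A * A = 0 := by
  classical
  simpa [ht] using mul_mul_self_eq_trace_smul_of_rank_le_one h 1

theorem pow_three_add_smul_of_rank_le_one [DecidableEq m] [Field K] {A B : Matrix m m K}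
    (hrA : A.rank ≤ 1) (hrB : B.rank ≤ 1) (htA : A.trace = 0) (htB : B.trace = 0) (c : K) :
    (A + c • B) ^ 3 = (c * (A * B).trace) • (A + c • B) := by
  have hAA := mul_self_eq_zero_of_rank_le_one hrA htA
  have hBB := mul_self_eq_zero_of_rank_le_one hrB htB
  have hABA := mul_mul_self_eq_trace_smul_of_rank_le_one hrA B
  have hBAB : B * A * B = (A * B).trace • B := by
    rw [mul_mul_self_eq_trace_smul_of_rank_le_one hrB A, trace_mul_comm]
  have hsq : (A + c • B) ^ 2 = c • (A * B + B * A) := by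
    simp only [sq, add_mul, mul_add, smul_mul_assoc, mul_smul_comm, hAA, hBB, smul_zero,
      zero_add, add_zero]
    module
  rw [pow_succ, hsq]
  simp only [smul_mul_assoc, add_mul, mul_add, mul_smul_comm, mul_assoc, hAA, hBB, mul_zero,
    smul_zero, add_zero, zero_add, smul_add]
  simp only [← mul_assoc, hABA, hBAB]
  module

end RankOne

section UpperTriangular

variable {m R : Type*} [Fintype m] [LinearOrder m]

theorem IsUpperTriangular.mul_apply_self [NonUnitalNonAssocSemiring R] {D E : Matrix m m R}
    (hD : D.IsUpperTriangular) (hE : E.IsUpperTriangular) (i : m) :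
    (D * E) i i = D i i * E i i := by
  refine Finset.sum_eq_single_of_mem i (Finset.mem_univ i) fun j _ hj => ?_
  change D i j * E j i = 0
  rcases hj.lt_or_gt with hji | hij
  · rw [hD hji, zero_mul]
  · rw [hE hij, mul_zero]

theorem IsUpperTriangular.pow_apply_self [DecidableEq m] [Semiring R] {D : Matrix m m R}
    (hD : D.IsUpperTriangular) (k : ℕ) (i : m) : (D ^ k) i i = D i i ^ k := by
  induction k with
  | zero => simp
  | succ k ih => rw [pow_succ, IsUpperTriangular.mul_apply_self (hD.pow k) hD, ih, pow_succ]

theorem IsUpperTriangular.isNilpotent_of_diag_eq_zero [DecidableEq m] [CommRing R]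
    {D : Matrix m m R} (hD : D.IsUpperTriangular) (h0 : ∀ i, D i i = 0) : IsNilpotent D := by
  have hcp : D.charpoly = Polynomial.X ^ Fintype.card m := by
    simp [charpoly_of_isUpperTriangular D hD, h0]
  refine ⟨Fintype.card m, ?_⟩
  simpa [hcp] using aeval_self_charpoly D

end UpperTriangular

end Matrix

theorem eq_zero_of_isNilpotent_of_pow_three_eq_smul {K A : Type*} [Field K] [Ring A]
    [Algebra K A] {x : K} (hx : x ≠ 0) {a : A} (ha : IsNilpotent a) (h : a ^ 3 = x • a) :
    a = 0 := by
  have hodd : ∀ k : ℕ, a ^ (2 * k + 1) = x ^ k • a := by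
    intro k
    induction k with
    | zero => simp
    | succ k ih =>
      rw [show 2 * (k + 1) + 1 = 2 * k + 1 + 2 by ring, pow_add, ih, smul_mul_assoc,
        ← pow_succ', show 2 + 1 = 3 from rfl, h, smul_smul, ← pow_succ]
  obtain ⟨N, hN⟩ := ha
  have h0 : a ^ (2 * N + 1) = 0 := by
    rw [show 2 * N + 1 = N + (N + 1) by ring, pow_add, hN, zero_mul]
  rwa [hodd, smul_eq_zero, or_iff_right (pow_ne_zero N hx)] at h0

theorem Matrix.Triangularizable.eq_zero_of_pow_three_eq_smul {n : ℕ} {F : Type*} [Field F]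
    {C : Matrix (Fin n) (Fin n) F} (hC : C.Triangularizable) {x : F} (hx : ¬ IsSquare x)
    (h : C ^ 3 = x • C) : C = 0 := by
  obtain ⟨P, hD⟩ := hC
  set D := (P : Matrix (Fin n) (Fin n) F) * C * ((P⁻¹ : (Matrix (Fin n) (Fin n) F)ˣ) :
    Matrix (Fin n) (Fin n) F)
  have hD3 : D ^ 3 = x • D := by
    rw [Units.conj_pow, h, mul_smul_comm, smul_mul_assoc]
  have hdiag : ∀ i, D i i = 0 := by
    intro i
    by_contra hi
    have hcube : D i i ^ 3 = x * D i i := by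
      rw [← IsUpperTriangular.pow_apply_self hD, hD3, smul_apply, smul_eq_mul]
    exact hx ⟨D i i, mul_right_cancel₀ hi (by rw [← hcube]; ring)⟩
  have hx0 : x ≠ 0 := by
    rintro rfl
    exact hx ⟨0, (mul_zero 0).symm⟩
  have hD0 : D = 0 := eq_zero_of_isNilpotent_of_pow_three_eq_smul hx0
    (IsUpperTriangular.isNilpotent_of_diag_eq_zero hD hdiag) hD3
  rwa [Units.mul_left_eq_zero, Units.mul_right_eq_zero] at hD0

theorem stmt_0_general {F : Type*} [Field F]
    (hNRC : ¬ Function.Surjective fun x : F => x ^ 2)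
    {n : ℕ}
    (M : Submodule F (Matrix (Fin n) (Fin n) F))
    (hM : ∀ A ∈ M, A.Triangularizable)
    (A B : Matrix (Fin n) (Fin n) F) (hA : A ∈ M) (hB : B ∈ M)
    (hrA : A.rank ≤ 1) (hrB : B.rank ≤ 1)
    (htA : A.trace = 0) (htB : B.trace = 0) :
    (A * B).trace = 0 := by
  obtain ⟨x, hx⟩ := not_forall.mp hNRC
  have hxsq : ¬ IsSquare x := fun ⟨r, hr⟩ => hx ⟨r, (sq r).trans hr.symm⟩
  by_contra ht
  have hC : (A + (x / (A * B).trace) • B) ^ 3 = x • (A + (x / (A * B).trace) • B) := by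
    rw [Matrix.pow_three_add_smul_of_rank_le_one hrA hrB htA htB, div_mul_cancel₀ x ht]
  have hC0 := (hM _ (M.add_mem hA (M.smul_mem _ hB))).eq_zero_of_pow_three_eq_smul hxsq hC
  apply ht
  rw [eq_neg_of_add_eq_zero_left hC0, Matrix.neg_mul, Matrix.smul_mul,
    Matrix.mul_self_eq_zero_of_rank_le_one hrB htB, smul_zero, Matrix.trace_neg,
    Matrix.trace_zero, neg_zero]

theorem stmt_0 {F : Type*} [Field F]
    (hNRC : ¬ Function.Surjective fun x : F => x ^ 2)
    {n : ℕ} (hn : 2 ≤ n)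
    (M : Submodule F (Matrix (Fin n) (Fin n) F))
    (hM : ∀ A ∈ M, A.Triangularizable)
    (A B : Matrix (Fin n) (Fin n) F) (hA : A ∈ M) (hB : B ∈ M)
    (hrA : A.rank ≤ 1) (hrB : B.rank ≤ 1)
    (htA : A.trace = 0) (htB : B.trace = 0) :
    (A * B).trace = 0 :=
  stmt_0_general hNRC M hM A B hA hB hrA hrB htA htB
end

section
/- Let F be a field, V a finite-dimensional F-vector space, W a linear subspace of V, and T an arbitrary linear subspace of End(V). Let T^⊥ denote the orthogonal complement of T with respect to the nondegenerate symmetric bilinear form (u,v) ↦ tr(u∘v) on End(V). Then dim(T ∩ Hom(V,W)) + dim{u|_W : u ∈ T^⊥} = (dim W)·(dim V), where Hom(V,W) is identified with the space of endomorphisms of V whose range lies in W, and u|_W ∈ Hom(W,V) is the restriction of u to W. -/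
/-!
Write `H = Hom(V, W)` and `n = dim V`. Testing against rank-one maps shows that the trace pairing
between `Hom(M, N)` and `Hom(N, M)` is nondegenerate; in particular the trace form on `End(V)` is,
and `H^⊥` is exactly the set of maps vanishing on `W`. Hence restriction to `W` maps `T^⊥` onto
`{u|_W : u ∈ T^⊥}` with kernel `T^⊥ ∩ H^⊥ = (T + H)^⊥`, so its dimension is
`(n² - dim T) - (n² - dim (T + H)) = dim H - dim (T ∩ H)`, and `dim H = dim W · n`.
-/

open LinearMap Module

section

variable {F : Type*} [Field F]

theorem LinearMap.BilinForm.orthogonal_sup {R M : Type*} [CommSemiring R] [AddCommMonoid M]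
    [Module R M] (B : LinearMap.BilinForm R M) (N L : Submodule R M) :
    B.orthogonal (N ⊔ L) = B.orthogonal N ⊓ B.orthogonal L := by
  refine le_antisymm (le_inf (B.orthogonal_le le_sup_left) (B.orthogonal_le le_sup_right)) ?_
  rintro u ⟨hN, hL⟩ x hx
  obtain ⟨n, hn, l, hl, rfl⟩ := Submodule.mem_sup.1 hx
  simp [hN n hn, hL l hl]

theorem finrank_map_add_finrank_inf_ker {M N : Type*} [AddCommGroup M] [Module F M]
    [AddCommGroup N] [Module F N] [FiniteDimensional F M] (f : M →ₗ[F] N) (p : Submodule F M) :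
    finrank F (p.map f) + finrank F ↥(p ⊓ ker f) = finrank F p := by
  have h := finrank_range_add_finrank_ker (f.domRestrict p)
  rw [range_domRestrict, ker_domRestrict] at h
  rw [← h, ← Submodule.finrank_map_subtype_eq p (Submodule.comap p.subtype (ker f)),
    Submodule.map_comap_subtype]

section Hom

variable {M N : Type*} [AddCommGroup M] [Module F M] [AddCommGroup N] [Module F N]

theorem eq_zero_of_forall_trace_comp_eq_zero [FiniteDimensional F N] {b : M →ₗ[F] N}
    (h : ∀ a : N →ₗ[F] M, trace F N (b ∘ₗ a) = 0) : b = 0 := by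
  ext x
  rw [LinearMap.zero_apply, ← forall_dual_apply_eq_zero_iff F]
  intro g
  have hrank_one : b ∘ₗ dualTensorHom F N M (g ⊗ₜ x) = dualTensorHom F N N (g ⊗ₜ b x) := by
    ext y; simp
  simpa [hrank_one, trace_eq_contract_apply] using h (dualTensorHom F N M (g ⊗ₜ x))

theorem ker_llcomp_mkQ_eq_range (W : Submodule F N) :
    ker (llcomp F M N (N ⧸ W) W.mkQ : (M →ₗ[F] N) →ₗ[F] M →ₗ[F] N ⧸ W)
      = range (llcomp F M W N W.subtype : (M →ₗ[F] W) →ₗ[F] M →ₗ[F] N) := by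
  ext u
  change W.mkQ ∘ₗ u = 0 ↔ _
  rw [← range_le_ker_iff, Submodule.ker_mkQ]
  constructor
  · intro hu
    exact ⟨u.codRestrict W fun x => hu (mem_range_self u x), rfl⟩
  · rintro ⟨b, rfl⟩
    exact (range_comp_le_range b W.subtype).trans W.range_subtype.le

theorem finrank_ker_llcomp_mkQ [FiniteDimensional F M] [FiniteDimensional F N]
    (W : Submodule F N) :
    finrank F (ker (llcomp F M N (N ⧸ W) W.mkQ : (M →ₗ[F] N) →ₗ[F] M →ₗ[F] N ⧸ W))
      = finrank F W * finrank F M := by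
  have hinj : Function.Injective
      (llcomp F M W N W.subtype : (M →ₗ[F] W) →ₗ[F] M →ₗ[F] N) := fun a b hab =>
    ext fun x => Subtype.ext (LinearMap.congr_fun hab x)
  rw [ker_llcomp_mkQ_eq_range, finrank_range_of_inj hinj, finrank_linearMap, mul_comm]

end Hom

section TraceForm

variable (F) (V : Type*) [AddCommGroup V] [Module F V]

noncomputable def traceBilinForm : LinearMap.BilinForm F (V →ₗ[F] V) :=
  (llcomp F V V V).compr₂ (trace F V)

variable {F V}

@[simp]
theorem traceBilinForm_apply (u v : V →ₗ[F] V) :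
    traceBilinForm F V u v = trace F V (u ∘ₗ v) := rfl

variable [FiniteDimensional F V]

theorem traceBilinForm_nondegenerate :
    (traceBilinForm F V).Nondegenerate :=
  ⟨fun _ hu => eq_zero_of_forall_trace_comp_eq_zero hu,
    fun v hv => eq_zero_of_forall_trace_comp_eq_zero fun u => by
      rw [trace_comp_comm']; exact hv u⟩

theorem iInf_ker_trace_comp_lcomp_eq_orthogonal (T : Submodule F (V →ₗ[F] V)) :
    ⨅ v ∈ T, ker (trace F V ∘ₗ lcomp F V v) = (traceBilinForm F V).orthogonal T := by
  ext u
  simp [Submodule.mem_iInf, lcomp_apply', trace_comp_comm' u]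

theorem orthogonal_ker_llcomp_mkQ (W : Submodule F V) :
    (traceBilinForm F V).orthogonal
        (ker (llcomp F V V (V ⧸ W) W.mkQ : (V →ₗ[F] V) →ₗ[F] V →ₗ[F] V ⧸ W))
      = ker (lcomp F V W.subtype) := by
  ext u
  simp only [ker_llcomp_mkQ_eq_range, BilinForm.mem_orthogonal_iff, mem_range,
    forall_exists_index, forall_apply_eq_imp_iff, traceBilinForm_apply, mem_ker,
    lcomp_apply']
  constructor
  · intro h
    exact eq_zero_of_forall_trace_comp_eq_zero fun a => (trace_comp_comm' u _).symm.trans (h a)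
  · intro h a
    rw [trace_comp_comm']
    change trace F V ((u ∘ₗ W.subtype) ∘ₗ a) = 0
    rw [h, zero_comp, map_zero]

end TraceForm

end

theorem stmt_2 {F V : Type*} [Field F] [AddCommGroup V] [Module F V]
    [FiniteDimensional F V]
    (T : Submodule F (V →ₗ[F] V)) (W : Submodule F V) :
    Module.finrank F
        ↥(T ⊓ LinearMap.ker ((LinearMap.llcomp F V V (V ⧸ W)) W.mkQ))
      + Module.finrank F
          ↥(Submodule.map (LinearMap.lcomp F V W.subtype)
              (⨅ v ∈ T, LinearMap.ker
                ((LinearMap.trace F V) ∘ₗ (LinearMap.lcomp F V v))))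
      = Module.finrank F W * Module.finrank F V := by
  rw [iInf_ker_trace_comp_lcomp_eq_orthogonal]
  have hB := traceBilinForm_nondegenerate (F := F) (V := V)
  have hrestrict := finrank_map_add_finrank_inf_ker (lcomp F V W.subtype)
    ((traceBilinForm F V).orthogonal T)
  rw [← orthogonal_ker_llcomp_mkQ, ← BilinForm.orthogonal_sup, BilinForm.finrank_orthogonal hB,
    BilinForm.finrank_orthogonal hB] at hrestrict
  have hT_le := Submodule.finrank_le T
  have hTH_le := Submodule.finrank_le (T ⊔ ker (llcomp F V V (V ⧸ W) W.mkQ))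
  have hmodular := Submodule.finrank_sup_add_finrank_inf_eq T (ker (llcomp F V V (V ⧸ W) W.mkQ))
  have hH := finrank_ker_llcomp_mkQ (M := V) W
  omega
end

section
/- Let F be a field that is not quadratically closed (some degree-2 polynomial over F does not split). Let n ≥ 1, N ∈ Mat_n(F), and C ∈ F^n (a column vector). Suppose that for every row vector R ∈ Mat_{1,n}(F) and every a ∈ F, the (n+1)×(n+1) block matrix [[a, R],[C, N]] is triangularizable over F. Then C = 0. -/
open Polynomial Matrix

theorem Matrix.Triangularizable.charpoly_splits {n : ℕ} {F : Type*} [Field F]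
    {M : Matrix (Fin n) (Fin n) F} (hM : M.Triangularizable) : M.charpoly.Splits := by
  obtain ⟨P, hP⟩ := hM
  have h := charpoly_of_isUpperTriangular _ hP
  rw [coe_units_inv, charpoly_units_conj] at h
  rw [h]
  exact Splits.prod fun i _ => Splits.X_sub_C _

theorem Matrix.isRoot_charpoly_of_mulVec_eq_smul {m K : Type*} [Fintype m] [DecidableEq m]
    [Field K] {A : Matrix m m K} {θ : K} {w : m → K} (hw : w ≠ 0) (h : A *ᵥ w = θ • w) :
    A.charpoly.IsRoot θ := by
  rw [IsRoot, eval_charpoly, ← exists_mulVec_eq_zero_iff]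
  refine ⟨w, hw, ?_⟩
  ext i
  simp [sub_mulVec, h]

theorem Matrix.mem_range_of_isRoot_charpoly_map {m F K : Type*} [Fintype m] [DecidableEq m]
    [Field F] [Field K] {M : Matrix m m F} (hM : M.charpoly.Splits) {f : F →+* K} {θ : K}
    (h : (M.map f).charpoly.IsRoot θ) : θ ∈ f.range :=
  hM.mem_range_of_isRoot (charpoly_monic M).ne_zero (charpoly_map M f ▸ h)

namespace AdjoinRoot

variable {F : Type*} [Field F] {p : F[X]} [Fact (Irreducible p)]

theorem root_notMem_range (hp : ∀ x, ¬ p.IsRoot x) :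
    root p ∉ (algebraMap F (AdjoinRoot p)).range := by
  rintro ⟨x, hx⟩
  apply hp x
  have h := aeval_eq (R := F) (f := p) p
  rw [mk_self, ← hx, aeval_algebraMap_apply] at h
  simpa using h

theorem exists_eq_algebraMap_add_algebraMap_mul_root (hp : p.natDegree = 2) (z : AdjoinRoot p) :
    ∃ a b : F, z = algebraMap F _ a + algebraMap F _ b * root p := by
  obtain ⟨g, hg, rfl⟩ := (powerBasis (Fact.out : Irreducible p).ne_zero).exists_eq_aeval z
  rw [powerBasis_dim, hp] at hg
  refine ⟨g.coeff 0, g.coeff 1, ?_⟩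
  conv_lhs => rw [eq_X_add_C_of_natDegree_le_one (by omega : g.natDegree ≤ 1)]
  simp [powerBasis_gen, add_comm]

end AdjoinRoot

section Bordered

variable {ι F : Type*} [Field F]

def borderedMatrix (a : F) (R C : ι → F) (N : Matrix ι ι F) : Matrix (Fin 1 ⊕ ι) (Fin 1 ⊕ ι) F :=
  fromBlocks (of fun _ _ => a) (replicateRow (Fin 1) R) (replicateCol (Fin 1) C) N

theorem borderedMatrix_map {K : Type*} [Field K] (f : F →+* K) (a : F) (R C : ι → F)
    (N : Matrix ι ι F) :
    (borderedMatrix a R C N).map f = borderedMatrix (f a) (f ∘ R) (f ∘ C) (N.map f) := by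
  rw [borderedMatrix, fromBlocks_map]
  rfl

theorem borderedMatrix_mulVec_sumElim [Fintype ι] (a : F) (R C : ι → F) (N : Matrix ι ι F) (x : F)
    (v : ι → F) :
    borderedMatrix a R C N *ᵥ Sum.elim (fun _ => x) v
      = Sum.elim (fun _ => a * x + R ⬝ᵥ v) (x • C + N *ᵥ v) := by
  ext (i | i) <;> simp [borderedMatrix, mulVec, dotProduct, mul_comm]

theorem charpoly_splits_of_borderedMatrix [Fintype ι] [DecidableEq ι] {a : F} {C : ι → F} {N : Matrix ι ι F}
    (h : (borderedMatrix a 0 C N).charpoly.Splits) : N.charpoly.Splits := by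
  have hprod : (borderedMatrix a 0 C N).charpoly
      = (of fun (_ : Fin 1) (_ : Fin 1) => a).charpoly * N.charpoly := by
    simp [borderedMatrix]
  exact h.of_dvd (charpoly_monic _).ne_zero (hprod ▸ dvd_mul_left _ _)

end Bordered

section Range

variable {F K : Type*} [Field F] [Field K] (f : F →+* K) {θ : K}

theorem RingHom.eq_zero_of_mul_mem_range (hθ : θ ∉ f.range) {x : K} (hx : x ∈ f.range)
    (hθx : θ * x ∈ f.range) : x = 0 := by
  by_contra hx0
  obtain ⟨u, rfl⟩ := hx
  obtain ⟨c, hc⟩ := hθx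
  exact hθ ⟨c / u, by rw [map_div₀, hc, mul_div_cancel_right₀ _ hx0]⟩

theorem RingHom.exists_add_mul_eq_of_notMem_range (hspan : ∀ z : K, ∃ a b : F, z = f a + f b * θ)
    {x : K} (hx : x ∉ f.range) : ∃ a b : F, f a + f b * x = θ := by
  obtain ⟨α, β, rfl⟩ := hspan x
  have hβ : f β ≠ 0 := fun hβ => hx ⟨α, by simp [hβ]⟩
  refine ⟨-α / β, β⁻¹, ?_⟩
  simp only [map_div₀, map_neg, map_inv₀]
  field_simp
  ring

end Range

theorem eq_zero_of_forall_charpoly_borderedMatrix_splits {ι F K : Type*} [Fintype ι]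
    [DecidableEq ι] [Field F] [Field K] (f : F →+* K) {θ : K} (hθ : θ ∉ f.range)
    (hspan : ∀ z : K, ∃ a b : F, z = f a + f b * θ) {C : ι → F} {N : Matrix ι ι F}
    (h : ∀ R a, (borderedMatrix a R C N).charpoly.Splits) : C = 0 := by
  have no_eigenvector : ∀ R a (w : Fin 1 ⊕ ι → K),
      w ≠ 0 → (borderedMatrix a R C N).map f *ᵥ w ≠ θ • w := fun R a w hw hwθ =>
    hθ (mem_range_of_isRoot_charpoly_map (h R a) (isRoot_charpoly_of_mulVec_eq_smul hw hwθ))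
  set A := scalar ι θ - N.map f
  have hA : IsUnit A.det := by
    rw [isUnit_iff_ne_zero, ← eval_charpoly]
    exact fun hroot =>
      hθ (mem_range_of_isRoot_charpoly_map (charpoly_splits_of_borderedMatrix (h 0 0)) hroot)
  set v := A⁻¹ *ᵥ (f ∘ C)
  have hv : f ∘ C + N.map f *ᵥ v = θ • v := by
    have hAv : A *ᵥ v = f ∘ C := by simp [v, mulVec_mulVec, mul_nonsing_inv _ hA]
    rw [← hAv]
    simp [A, sub_mulVec]
  by_cases hrange : ∀ i, v i ∈ f.range
  · choose u hu using hrange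
    have hvu : v = f ∘ u := funext fun i => (hu i).symm
    have hv0 : v = 0 := funext fun i => f.eq_zero_of_mul_mem_range hθ ⟨u i, hu i⟩
      ⟨C i + (N *ᵥ u) i, by
        rw [map_add, f.map_mulVec, ← smul_eq_mul, ← Pi.smul_apply, ← hv, hvu]
        rfl⟩
    have hC : f ∘ C = 0 := by simpa [hv0] using hv
    funext i
    exact (map_eq_zero f).mp (congrFun hC i)
  · push Not at hrange
    obtain ⟨i, hi⟩ := hrange
    obtain ⟨a, b, hab⟩ := f.exists_add_mul_eq_of_notMem_range hspan hi
    refine (no_eigenvector (Pi.single i b) a (Sum.elim (fun _ => 1) v) ?_ ?_).elim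
    · exact fun h0 => one_ne_zero (congrFun h0 (Sum.inl 0))
    · rw [borderedMatrix_map, borderedMatrix_mulVec_sumElim, one_smul, hv]
      ext (j | j) <;> simp [← hab, dotProduct, Pi.single_apply, apply_ite f]

theorem stmt_3_general {F : Type*} [Field F]
    (hQC : ∃ q : Polynomial F, q.degree = 2 ∧ ¬ (q.map (RingHom.id F)).Splits)
    {n : ℕ}
    (N : Matrix (Fin n) (Fin n) F) (C : Fin n → F)
    (h : ∀ (R : Fin n → F) (a : F),
      ((Matrix.fromBlocks
          (Matrix.of fun (_ : Fin 1) (_ : Fin 1) => a)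
          (Matrix.of fun (_ : Fin 1) (j : Fin n) => R j)
          (Matrix.of fun (i : Fin n) (_ : Fin 1) => C i)
          N).reindex finSumFinEquiv finSumFinEquiv).Triangularizable) :
    C = 0 := by
  obtain ⟨q, hq, hs⟩ := hQC
  rw [Polynomial.map_id] at hs
  have hq2 : q.natDegree = 2 := natDegree_eq_of_degree_eq_some hq
  have hroot : ∀ x, ¬ q.IsRoot x := fun x hx => hs (Splits.of_natDegree_eq_two hq2 hx)
  have : Fact (Irreducible q) :=
    ⟨irreducible_of_degree_le_three_of_not_isRoot (by simp [hq2]) hroot⟩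
  refine eq_zero_of_forall_charpoly_borderedMatrix_splits (algebraMap F (AdjoinRoot q))
    (AdjoinRoot.root_notMem_range hroot)
    (AdjoinRoot.exists_eq_algebraMap_add_algebraMap_mul_root hq2) (N := N) fun R a => ?_
  have hRa := (h R a).charpoly_splits
  rwa [charpoly_reindex] at hRa

theorem stmt_3 {F : Type*} [Field F]
    (hQC : ∃ q : Polynomial F, q.degree = 2 ∧ ¬ (q.map (RingHom.id F)).Splits)
    {n : ℕ} (hn : 1 ≤ n)
    (N : Matrix (Fin n) (Fin n) F) (C : Fin n → F)
    (h : ∀ (R : Fin n → F) (a : F),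
      ((Matrix.fromBlocks
          (Matrix.of fun (_ : Fin 1) (_ : Fin 1) => a)
          (Matrix.of fun (_ : Fin 1) (j : Fin n) => R j)
          (Matrix.of fun (i : Fin n) (_ : Fin 1) => C i)
          N).reindex finSumFinEquiv finSumFinEquiv).Triangularizable) :
    C = 0 :=
  stmt_3_general hQC N C h
end

section
/- Let F be a field of characteristic not 2 that is not Pythagorean. Then there exists a 2×2 symmetric matrix over F with no eigenvalue in F; consequently the space of 2×2 symmetric matrices over F is not weakly triangularizable. -/
theorem stmt_6 {F : Type*} [Field F] (h2 : (2 : F) ≠ 0)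
    (hNP : ∃ a b : F, ∀ c : F, a ^ 2 + b ^ 2 ≠ c ^ 2) :
    ∃ M : Matrix (Fin 2) (Fin 2) F, M.IsSymm ∧
      (∀ μ : F, ¬ ∃ v : Fin 2 → F, v ≠ 0 ∧ M.mulVec v = μ • v) ∧
      ¬ M.Triangularizable := by
  obtain ⟨a, b, hab⟩ := hNP
  have hb : b ≠ 0 := by
    intro h
    exact hab a (by rw [h]; ring)
  set M : Matrix (Fin 2) (Fin 2) F := !![a, b; b, -a] with hM
  have heig : ∀ μ : F, ¬ ∃ v : Fin 2 → F, v ≠ 0 ∧ M.mulVec v = μ • v := by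
    rintro μ ⟨v, hv, hmv⟩
    have e0 : a * v 0 + b * v 1 = μ * v 0 := by
      have := congrFun hmv 0
      simpa [hM, Matrix.mulVec, dotProduct, Fin.sum_univ_two] using this
    have e1 : b * v 0 + -a * v 1 = μ * v 1 := by
      have := congrFun hmv 1
      simpa [hM, Matrix.mulVec, dotProduct, Fin.sum_univ_two] using this
    have hx : v 0 ≠ 0 := by
      intro h0
      have hy : v 1 = 0 := by
        have : b * v 1 = 0 := by rw [h0] at e0; linear_combination e0
        exact (mul_eq_zero.mp this).resolve_left hb
      apply hv
      funext i
      fin_cases i <;> simp [h0, hy]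
    have hy : v 1 ≠ 0 := by
      intro h1
      have : b * v 0 = 0 := by rw [h1] at e1; linear_combination e1
      exact hx ((mul_eq_zero.mp this).resolve_left hb)
    have key : (a ^ 2 + b ^ 2) * (v 0 * v 1) = μ ^ 2 * (v 0 * v 1) := by
      linear_combination (v 1 * (μ + a)) * e0 + (b * v 1) * e1
    exact hab μ (mul_right_cancel₀ (mul_ne_zero hx hy) key)
  refine ⟨M, ?_, heig, ?_⟩
  · unfold Matrix.IsSymm
    ext i j
    fin_cases i <;> fin_cases j <;> simp [hM]
  · rintro ⟨P, hT⟩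
    set A : Matrix (Fin 2) (Fin 2) F := (P : Matrix (Fin 2) (Fin 2) F)
    set B : Matrix (Fin 2) (Fin 2) F := ((P⁻¹ : (Matrix (Fin 2) (Fin 2) F)ˣ) :
      Matrix (Fin 2) (Fin 2) F)
    have hAB : A * B = 1 := P.mul_inv
    have hBA : B * A = 1 := P.inv_mul
    set T : Matrix (Fin 2) (Fin 2) F := A * M * B with hTdef
    have h10 : T 1 0 = 0 := hT (show (0 : Fin 2) < 1 by decide)
    set e : Fin 2 → F := Pi.single 0 1
    set v : Fin 2 → F := B.mulVec e with hvdef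
    have hvne : v ≠ 0 := by
      intro h0
      have : A.mulVec v = 0 := by rw [h0]; simp
      rw [hvdef, Matrix.mulVec_mulVec, hAB, Matrix.one_mulVec] at this
      have := congrFun this 0
      simp [e, Pi.single] at this
    apply heig (T 0 0)
    refine ⟨v, hvne, ?_⟩
    have hTe : T.mulVec e = T 0 0 • e := by
      funext i
      fin_cases i <;>
        simp [Matrix.mulVec, dotProduct, Fin.sum_univ_two, e, Pi.single, h10]
    calc M.mulVec v = (B * T).mulVec e := by
          rw [hvdef, Matrix.mulVec_mulVec, hTdef]
          congr 1
          simp only [← Matrix.mul_assoc]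
          rw [hBA, Matrix.one_mul]
      _ = B.mulVec (T.mulVec e) := by rw [← Matrix.mulVec_mulVec]
      _ = B.mulVec (T 0 0 • e) := by rw [hTe]
      _ = T 0 0 • v := by rw [Matrix.mulVec_smul, hvdef]
end

section
/- Let F be a field of characteristic 2 in which the squaring map is not surjective (NRC). Suppose that every 2×2 symmetric matrix over F is triangularizable over F (i.e., its characteristic polynomial splits over F). Then every monic polynomial of degree 2 over F with nonzero coefficient on t (i.e., every separable monic quadratic) has a root in F. -/
theorem Matrix.exists_sq_sub_trace_mul_add_det_eq_zero {R : Type*} [CommRing R] [Nontrivial R]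
    {M : Matrix (Fin 2) (Fin 2) R} (hM : M.charpoly.Splits) :
    ∃ x : R, x ^ 2 - M.trace * x + M.det = 0 := by
  have hdeg : M.charpoly.degree ≠ 0 := by simp [Matrix.charpoly_degree_eq_dim]
  obtain ⟨x, hx⟩ := hM.exists_eval_eq_zero hdeg
  exact ⟨x, by simpa [Matrix.charpoly_fin_two] using hx⟩

/-- In characteristic 2 the matrix `[[a, a], [a, a + b]]` has trace `b` and determinant `a b`,
so `a = c / b` realises any pair `(b, c)` with `b ≠ 0`. -/
theorem CharTwo.exists_isSymm_trace_det {F : Type*} [Field F] [CharP F 2] {b : F} (hb : b ≠ 0)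
    (c : F) : ∃ M : Matrix (Fin 2) (Fin 2) F, M.IsSymm ∧ M.trace = b ∧ M.det = c := by
  refine ⟨!![c / b, c / b; c / b, c / b + b], ?_, ?_, ?_⟩
  · ext i j
    fin_cases i <;> fin_cases j <;> rfl
  · rw [Matrix.trace_fin_two_of, ← add_assoc, CharTwo.add_self_eq_zero, zero_add]
  · rw [Matrix.det_fin_two_of, mul_add, add_sub_cancel_left, div_mul_cancel₀ c hb]

theorem stmt_10_general {F : Type*} [Field F] [CharP F 2]
    (h : ∀ M : Matrix (Fin 2) (Fin 2) F, M.IsSymm →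
      M.charpoly.Splits) :
    ∀ b c : F, b ≠ 0 → ∃ x : F, x ^ 2 + b * x + c = 0 := by
  intro b c hb
  obtain ⟨M, hsymm, htrace, hdet⟩ := CharTwo.exists_isSymm_trace_det hb c
  obtain ⟨x, hx⟩ := Matrix.exists_sq_sub_trace_mul_add_det_eq_zero (h M hsymm)
  exact ⟨x, by rwa [htrace, hdet, CharTwo.sub_eq_add] at hx⟩

theorem stmt_10 {F : Type*} [Field F] [CharP F 2]
    (hNRC : ¬ Function.Surjective fun x : F => x ^ 2)
    (h : ∀ M : Matrix (Fin 2) (Fin 2) F, M.IsSymm →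
      M.charpoly.Splits) :
    ∀ b c : F, b ≠ 0 → ∃ x : F, x ^ 2 + b * x + c = 0 :=
  stmt_10_general h
end

section
/- Let F be a field of characteristic 2 in which every separable monic polynomial of degree 2 splits. Then every 2×2 symmetric matrix over F is triangularizable over F. -/
open Polynomial

namespace Matrix

theorem blockTriangular_id_fin_two_iff {R : Type*} [Zero R] (M : Matrix (Fin 2) (Fin 2) R) :
    M.BlockTriangular id ↔ M 1 0 = 0 := by
  refine ⟨fun h ↦ h (by decide), fun h i j hij ↦ ?_⟩
  fin_cases i <;> fin_cases j <;> simp_all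

theorem isRoot_charpoly_fin_two_iff {R : Type*} [CommRing R] [Nontrivial R]
    (M : Matrix (Fin 2) (Fin 2) R) (l : R) :
    M.charpoly.IsRoot l ↔ (l - M 0 0) * (l - M 1 1) = M 0 1 * M 1 0 := by
  rw [charpoly_fin_two, IsRoot, trace_fin_two, det_fin_two, ← sub_eq_zero (a := _ * _)]
  simp only [eval_add, eval_sub, eval_mul, eval_pow, eval_X, eval_C]
  ring_nf

theorem triangularizable_of_isRoot_charpoly {F : Type*} [Field F]
    (M : Matrix (Fin 2) (Fin 2) F) {l : F} (hl : M.charpoly.IsRoot l) :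
    M.Triangularizable := by
  by_cases hc : M 1 0 = 0
  · exact ⟨1, by simpa [blockTriangular_id_fin_two_iff] using hc⟩
  rw [isRoot_charpoly_fin_two_iff] at hl
  -- `(x, 1)` with `x = (l - M 1 1) / M 1 0` is an eigenvector for `l`; complete it by `(1, 0)`.
  set x := (l - M 1 1) / M 1 0 with hx
  let P : (Matrix (Fin 2) (Fin 2) F)ˣ :=
    ⟨!![0, 1; 1, -x], !![x, 1; 1, 0], by simp [one_fin_two], by simp [one_fin_two]⟩
  refine ⟨P, (blockTriangular_id_fin_two_iff _).2 ?_⟩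
  simp [P, mul_apply, vecMul, dotProduct, Fin.sum_univ_two, hx]
  field_simp
  linear_combination -hl

theorem exists_isRoot_charpoly_of_isSymm_of_charTwo {F : Type*} [Field F] [CharP F 2]
    (hsep : ∀ b c : F, b ≠ 0 → ∃ x : F, x ^ 2 + b * x + c = 0)
    {M : Matrix (Fin 2) (Fin 2) F} (hM : M.IsSymm) : ∃ l, M.charpoly.IsRoot l := by
  simp_rw [isRoot_charpoly_fin_two_iff, hM.apply 1 0]
  by_cases htr : M 0 0 + M 1 1 = 0
  · exact ⟨M 0 0 + M 1 0, by rw [(CharTwo.add_eq_zero.1 htr).symm]; ring⟩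
  · obtain ⟨x, hx⟩ := hsep _ (M 0 0 * M 1 1 + M 1 0 ^ 2) htr
    refine ⟨x, ?_⟩
    linear_combination hx - ((M 0 0 + M 1 1) * x + M 1 0 ^ 2) * CharTwo.two_eq_zero (R := F)

end Matrix

theorem stmt_11 {F : Type*} [Field F] [CharP F 2]
    (hsep : ∀ b c : F, b ≠ 0 → ∃ x : F, x ^ 2 + b * x + c = 0)
    (M : Matrix (Fin 2) (Fin 2) F) (hM : M.IsSymm) :
    M.Triangularizable := by
  obtain ⟨l, hl⟩ := Matrix.exists_isRoot_charpoly_of_isSymm_of_charTwo hsep hM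
  exact M.triangularizable_of_isRoot_charpoly hl
end

section
/- Let F be a field of characteristic 2 in which the squaring map is not surjective. Then there exists a 3×3 symmetric matrix over F that is not triangularizable over F; hence for every n ≥ 3, the space of n×n symmetric matrices over F is not weakly triangularizable. -/
/-!
A matrix similar to an upper triangular one has characteristic polynomial `∏ (X - C dᵢ)`, so
every divisor of its characteristic polynomial splits. In characteristic 2 the symmetric matrix
`!![a, a, 0; a, a + 1, 1; 0, 1, 1]` has characteristic polynomial `X * (X ^ 2 - C a)`, and
`X ^ 2 - C a` has no root when `a` is not a square. Padding it with zeros gives a symmetric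
`n × n` matrix whose characteristic polynomial is `X ^ (n - 2) * (X ^ 2 - C a)`.
-/

open Polynomial

namespace Matrix

section Triangularizable

variable {F : Type*} [Field F] {n : ℕ}

theorem Triangularizable.splits_charpoly {M : Matrix (Fin n) (Fin n) F}
    (h : M.Triangularizable) : M.charpoly.Splits := by
  obtain ⟨P, hP⟩ := h
  rw [← charpoly_units_conj P M, ← coe_units_inv, charpoly_of_isUpperTriangular _ hP]
  exact Splits.prod fun i _ => Splits.X_sub_C _

theorem not_triangularizable_of_dvd_charpoly {M : Matrix (Fin n) (Fin n) F} {f : F[X]}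
    (hf : f.degree ≠ 0) (hroot : ∀ x, ¬ f.IsRoot x) (hdvd : f ∣ M.charpoly) :
    ¬ M.Triangularizable := fun h =>
  have ⟨x, hx⟩ := (h.splits_charpoly.of_dvd M.charpoly_monic.ne_zero hdvd).exists_eval_eq_zero hf
  hroot x hx

theorem not_triangularizable_of_X_sq_sub_C_dvd_charpoly {M : Matrix (Fin n) (Fin n) F} {a : F}
    (ha : ¬ IsSquare a) (hdvd : X ^ 2 - C a ∣ M.charpoly) : ¬ M.Triangularizable := by
  refine not_triangularizable_of_dvd_charpoly (by rw [degree_X_pow_sub_C two_pos]; decide) ?_ hdvd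
  intro x hx
  rw [IsRoot, eval_sub, eval_pow, eval_X, eval_C, sub_eq_zero] at hx
  exact ha ⟨x, by rw [← hx, sq]⟩

end Triangularizable

section PadZero

variable {R : Type*} {m n : ℕ}

def padZero [Zero R] (A : Matrix (Fin m) (Fin m) R) (h : m ≤ n) : Matrix (Fin n) (Fin n) R :=
  let e : Fin m ⊕ Fin (n - m) ≃ Fin n := finSumFinEquiv.trans (finCongr (Nat.add_sub_cancel' h))
  reindex e e (fromBlocks A 0 0 0)

theorem IsSymm.padZero [Zero R] {A : Matrix (Fin m) (Fin m) R} (hA : A.IsSymm) (h : m ≤ n) :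
    (A.padZero h).IsSymm := by
  simp only [Matrix.padZero, IsSymm, transpose_reindex, fromBlocks_transpose, hA.eq,
    transpose_zero]

theorem charpoly_padZero [CommRing R] (A : Matrix (Fin m) (Fin m) R) (h : m ≤ n) :
    (A.padZero h).charpoly = A.charpoly * X ^ (n - m) := by
  rw [Matrix.padZero, charpoly_reindex, charpoly_fromBlocks_zero₂₁, charpoly_zero,
    Fintype.card_fin]

end PadZero

def charTwoSymm {F : Type*} [Field F] (a : F) : Matrix (Fin 3) (Fin 3) F :=
  !![a, a, 0; a, a + 1, 1; 0, 1, 1]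

theorem isSymm_charTwoSymm {F : Type*} [Field F] (a : F) : (charTwoSymm a).IsSymm := by
  ext i j
  fin_cases i <;> fin_cases j <;> rfl

theorem charpoly_charTwoSymm {F : Type*} [Field F] [CharP F 2] (a : F) :
    (charTwoSymm a).charpoly = X * (X ^ 2 - C a) := by
  have hchar : (2 : F[X]) = 0 := by
    rw [← C_ofNat, CharTwo.two_eq_zero, C_0]
  rw [charpoly, det_fin_three]
  simp only [charTwoSymm, charmatrix_apply_eq, charmatrix_apply_ne, ne_eq, Fin.reduceEq,
    not_false_eq_true, of_apply, cons_val', cons_val_zero, cons_val_one, cons_val, cons_val_fin_one,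
    map_add, map_one, map_zero]
  linear_combination (2 * C a * X - X ^ 2 - C a * X ^ 2) * hchar

end Matrix

open Matrix in
theorem stmt_12 {F : Type*} [Field F] [CharP F 2]
    (hNRC : ¬ Function.Surjective fun x : F => x ^ 2) :
    (∃ A : Matrix (Fin 3) (Fin 3) F, A.IsSymm ∧ ¬ A.Triangularizable) ∧
    ∀ n : ℕ, 3 ≤ n → ∃ A : Matrix (Fin n) (Fin n) F, A.IsSymm ∧
      ¬ A.Triangularizable := by
  obtain ⟨a, ha⟩ : ∃ a : F, ¬ IsSquare a := by
    simpa [Function.Surjective, IsSquare, sq, eq_comm] using hNRC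
  have hdvd : X ^ 2 - C a ∣ (charTwoSymm a).charpoly :=
    charpoly_charTwoSymm a ▸ dvd_mul_left _ _
  refine ⟨⟨_, isSymm_charTwoSymm a, not_triangularizable_of_X_sq_sub_C_dvd_charpoly ha hdvd⟩,
    fun n hn => ⟨_, (isSymm_charTwoSymm a).padZero hn, ?_⟩⟩
  refine not_triangularizable_of_X_sq_sub_C_dvd_charpoly ha ?_
  rw [charpoly_padZero]
  exact hdvd.mul_right _
end

section
/- Let F be a field which is quadratically closed (every degree-2 polynomial over F splits), and let n ≥ 2. Then the space of all n×n matrices over F of the block form [[A, ?],[0, U]] with A ∈ Mat₂(F) arbitrary, U upper triangular of size n−2, and the upper-right block arbitrary, is a weakly triangularizable subspace of Mat_n(F) of dimension n(n+1)/2 + 1. Hence t_n(F) > n(n+1)/2, where t_n(F) is the maximal dimension of a subspace of Mat_n(F) all of whose elements are triangularizable over F. -/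
/-- The space of block matrices [[A, ?], [0, U]] with A an arbitrary 2×2 block,
U upper triangular of size n−2, and arbitrary upper-right block: entries
below the diagonal vanish except possibly in the top-left 2×2 corner. -/
def blockSpace (F : Type*) [Field F] (n : ℕ) :
    Submodule F (Matrix (Fin n) (Fin n) F) where
  carrier := {M | ∀ i j : Fin n, (j : ℕ) < (i : ℕ) → 2 ≤ (i : ℕ) → M i j = 0}
  add_mem' := by
    intro a b ha hb i j h1 h2
    simp [Matrix.add_apply, ha i j h1 h2, hb i j h1 h2]
  zero_mem' := by intro i j _ _; rfl
  smul_mem' := by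
    intro c a ha i j h1 h2
    simp [Matrix.smul_apply, ha i j h1 h2]


/-!
The space is `[[A, B], [0, D]]` in block form (split `n = 2 + m`), with `D` upper triangular.
Over a quadratically closed field the characteristic polynomial of the `2 × 2` block `A` has a
root, so `A` is triangularizable; conjugating by `diag(P, 1)`, where `P` triangularizes `A`,
triangularizes the whole matrix. The space is cut out by the vanishing of the entries outside the
upper triangle and the corner entry `(1, 0)`, so its dimension is `n (n + 1) / 2 + 1`.
-/

open Finset Matrix

namespace Matrix

variable {F : Type*} [Field F]

theorem IsUpperTriangular.triangularizable {n : ℕ} {M : Matrix (Fin n) (Fin n) F}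
    (hM : M.IsUpperTriangular) : M.Triangularizable :=
  ⟨1, by simpa using hM⟩

theorem isUpperTriangular_of_fin_two (a b d : F) : (!![a, b; 0, d]).IsUpperTriangular := by
  intro i j hij
  fin_cases i <;> fin_cases j <;> simp_all

theorem triangularizable_of_isRoot_charpoly_s16 {A : Matrix (Fin 2) (Fin 2) F} {μ : F}
    (hμ : A.charpoly.IsRoot μ) : A.Triangularizable := by
  obtain ⟨a, b, c, d, rfl⟩ : ∃ a b c d, A = !![a, b; c, d] := ⟨_, _, _, _, eta_fin_two A⟩
  rcases eq_or_ne c 0 with rfl | hc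
  · exact (isUpperTriangular_of_fin_two a b d).triangularizable
  have hμ : μ ^ 2 - (a + d) * μ + (a * d - b * c) = 0 := by
    simpa [charpoly_fin_two, trace_fin_two, det_fin_two] using hμ
  -- the first column `(μ - d, c)` of `R` is a `μ`-eigenvector
  set R : Matrix (Fin 2) (Fin 2) F := !![μ - d, 1; c, 0]
  have hR : IsUnit R.det := by simpa [R, det_fin_two_of] using hc
  have hAR : !![a, b; c, d] * R = R * !![μ, 1; 0, a + d - μ] := by
    ext i j
    fin_cases i <;> fin_cases j <;> simp [R] <;> grind
  refine ⟨((isUnit_iff_isUnit_det R).mpr hR).unit⁻¹, ?_⟩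
  rw [inv_inv, coe_units_inv, IsUnit.unit_spec, mul_assoc, hAR, ← mul_assoc,
    nonsing_inv_mul _ hR, one_mul]
  exact isUpperTriangular_of_fin_two _ _ _

theorem triangularizable_of_splits_charpoly {A : Matrix (Fin 2) (Fin 2) F}
    (h : A.charpoly.Splits) : A.Triangularizable := by
  obtain ⟨μ, hμ⟩ := h.exists_eval_eq_zero (by simp [charpoly_degree_eq_dim])
  exact triangularizable_of_isRoot_charpoly_s16 hμ

theorem Triangularizable.reindex_fromBlocks {k m : ℕ} {A : Matrix (Fin k) (Fin k) F}
    {D : Matrix (Fin m) (Fin m) F} (hA : A.Triangularizable) (hD : D.Triangularizable)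
    (B : Matrix (Fin k) (Fin m) F) :
    (reindex finSumFinEquiv finSumFinEquiv (fromBlocks A B 0 D)).Triangularizable := by
  obtain ⟨⟨P, P', hPP', hP'P⟩, hP⟩ := hA
  obtain ⟨⟨Q, Q', hQQ', hQ'Q⟩, hQ⟩ := hD
  let φ := reindexAlgEquiv F F (finSumFinEquiv : Fin k ⊕ Fin m ≃ _)
  refine ⟨Units.map φ.toMonoidHom ⟨fromBlocks P 0 0 Q, fromBlocks P' 0 0 Q',
    by simp [fromBlocks_multiply, hPP', hQQ'], by simp [fromBlocks_multiply, hP'P, hQ'Q]⟩, ?_⟩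
  change (φ (fromBlocks P 0 0 Q) * φ (fromBlocks A B 0 D) *
    φ (fromBlocks P' 0 0 Q')).IsUpperTriangular
  rw [← map_mul, ← map_mul, fromBlocks_multiply, fromBlocks_multiply]
  simp only [φ, coe_reindexAlgEquiv, IsUpperTriangular, blockTriangular_reindex_iff]
  rintro (i | i) (j | j) hij <;> simp only [Function.comp_apply, id_eq, finSumFinEquiv_apply_left,
      finSumFinEquiv_apply_right, Fin.lt_def, Fin.val_castAdd, Fin.val_natAdd] at hij
  · simpa using hP (Fin.lt_def.2 hij)
  · omega
  · simp
  · simpa using hQ (show j < i from Fin.lt_def.2 (by omega))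

theorem finrank_eq_card_of_mem_iff {m n : Type*} [Fintype m] [Fintype n]
    {S : Finset (m × n)} {V : Submodule F (Matrix m n F)}
    (hV : ∀ M, M ∈ V ↔ ∀ i j, (i, j) ∉ S → M i j = 0) :
    Module.finrank F V = #S := by
  classical
  let e : V ≃ₗ[F] (S → F) :=
    { toFun := fun M p => (M : Matrix m n F) p.1.1 p.1.2
      map_add' := fun _ _ => rfl
      map_smul' := fun _ _ => rfl
      invFun := fun g => ⟨of fun i j => if h : (i, j) ∈ S then g ⟨_, h⟩ else 0,
        (hV _).2 fun i j h => dif_neg h⟩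
      left_inv := fun M => Subtype.ext <| funext₂ fun i j => by
        by_cases h : (i, j) ∈ S
        · simp [h]
        · simp [h, (hV M).1 M.2 i j h]
      right_inv := fun g => funext fun p => by simp }
  rw [e.finrank_eq, Module.finrank_fintype_fun_eq_card, Fintype.card_coe]

end Matrix

theorem Fin.card_filter_fst_le_snd (n : ℕ) :
    #{p : Fin n × Fin n | p.1 ≤ p.2} = n * (n + 1) / 2 := by
  rw [← Fintype.card_subtype, ← Fintype.card_congr Sym2.sortEquiv, Sym2.card, Fintype.card_fin,
    Nat.choose_two_right, Nat.add_sub_cancel, mul_comm]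

theorem exists_reindex_fromBlocks_of_mem_blockSpace {F : Type*} [Field F] {m : ℕ}
    {M : Matrix (Fin (2 + m)) (Fin (2 + m)) F} (hM : M ∈ blockSpace F (2 + m)) :
    ∃ (A : Matrix (Fin 2) (Fin 2) F) (B : Matrix (Fin 2) (Fin m) F)
      (D : Matrix (Fin m) (Fin m) F),
      D.IsUpperTriangular ∧ M = reindex finSumFinEquiv finSumFinEquiv (fromBlocks A B 0 D) := by
  set N := reindex finSumFinEquiv.symm finSumFinEquiv.symm M
  refine ⟨N.toBlocks₁₁, N.toBlocks₁₂, N.toBlocks₂₂, fun i j hij => ?_, ?_⟩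
  · simp only [id_eq, Fin.lt_def] at hij
    exact hM _ _ (by simp; omega) (by simp)
  · have h₂₁ : N.toBlocks₂₁ = 0 := by
      ext i j
      exact hM _ _ (by simp; omega) (by simp)
    rw [← h₂₁, fromBlocks_toBlocks]
    simp [N]

theorem finrank_blockSpace (F : Type*) [Field F] {n : ℕ} (hn : 2 ≤ n) :
    Module.finrank F (blockSpace F n) = n * (n + 1) / 2 + 1 := by
  let S : Finset (Fin n × Fin n) :=
    insert (⟨1, hn⟩, ⟨0, by omega⟩) ({p | p.1 ≤ p.2} : Finset (Fin n × Fin n))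
  have hS : #S = n * (n + 1) / 2 + 1 := by
    rw [card_insert_of_notMem (by simp), Fin.card_filter_fst_le_snd]
  rw [← hS]
  refine finrank_eq_card_of_mem_iff (V := blockSpace F n) fun M => forall₂_congr fun i j => ?_
  have hij : (i, j) ∉ S ↔ (j : ℕ) < i ∧ 2 ≤ (i : ℕ) := by
    simp only [S, mem_insert, mem_filter, mem_univ, true_and, Prod.mk.injEq, Fin.ext_iff,
      Fin.le_def]
    omega
  rw [hij, and_imp]

theorem stmt_16 {F : Type*} [Field F]
    (hQC : ∀ q : Polynomial F, q.degree = 2 → q.Splits)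
    {n : ℕ} (hn : 2 ≤ n) :
    (∀ M ∈ blockSpace F n, M.Triangularizable) ∧
    Module.finrank F (blockSpace F n) = n * (n + 1) / 2 + 1 := by
  refine ⟨fun M hM => ?_, finrank_blockSpace F hn⟩
  obtain ⟨m, rfl⟩ := Nat.exists_eq_add_of_le hn
  obtain ⟨A, B, D, hD, rfl⟩ := exists_reindex_fromBlocks_of_mem_blockSpace hM
  have hA : A.Triangularizable :=
    triangularizable_of_splits_charpoly (hQC _ (by simp [charpoly_degree_eq_dim]))
  exact hA.reindex_fromBlocks hD.triangularizable B
end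

section
/- Let F be a field, V a finite-dimensional vector space over F, and T a nonzero linear subspace of Hom(V, V') (V' finite-dimensional) in which every operator has rank at most 1. Then either all nonzero elements of T have the same kernel, or all nonzero elements of T have the same range. -/
open Module LinearMap

private lemma finrank_range_eq_one {F V V' : Type*} [Field F]
    [AddCommGroup V] [Module F V] [FiniteDimensional F V]
    [AddCommGroup V'] [Module F V'] [FiniteDimensional F V']
    {f : V →ₗ[F] V'} (hf : f ≠ 0) (h1 : LinearMap.rank f ≤ 1) :
    finrank F (LinearMap.range f) = 1 := by
  have hle : finrank F (LinearMap.range f) ≤ 1 := by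
    have := (Cardinal.toNat_le_toNat h1 Cardinal.one_lt_aleph0)
    simpa [LinearMap.rank, Module.finrank] using this
  have hne : LinearMap.range f ≠ ⊥ := by
    simpa [LinearMap.range_eq_bot] using hf
  have : finrank F (LinearMap.range f) ≠ 0 := by
    rwa [ne_eq, Submodule.finrank_eq_zero]
  omega

private lemma key_range_eq {F V V' : Type*} [Field F]
    [AddCommGroup V] [Module F V] [FiniteDimensional F V]
    [AddCommGroup V'] [Module F V'] [FiniteDimensional F V']
    (T : Submodule F (V →ₗ[F] V'))
    (hrk : ∀ f ∈ T, LinearMap.rank f ≤ 1)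
    {f g : V →ₗ[F] V'} (hfT : f ∈ T) (hf : f ≠ 0) (hgT : g ∈ T) (hg : g ≠ 0)
    (hker : LinearMap.ker f ≠ LinearMap.ker g) :
    LinearMap.range f = LinearMap.range g := by
  by_contra hran
  have hrf := finrank_range_eq_one hf (hrk f hfT)
  have hrg := finrank_range_eq_one hg (hrk g hgT)
  -- kernels have the same finrank
  have hkf : finrank F (LinearMap.ker f) = finrank F V - 1 := by
    have := f.finrank_range_add_finrank_ker
    omega
  have hkg : finrank F (LinearMap.ker g) = finrank F V - 1 := by
    have := g.finrank_range_add_finrank_ker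
    omega
  -- x ∈ ker g, f x ≠ 0
  have hnotle : ¬ LinearMap.ker g ≤ LinearMap.ker f := by
    intro hle
    exact hker (Submodule.eq_of_le_of_finrank_eq hle (by omega)).symm
  have hnotle' : ¬ LinearMap.ker f ≤ LinearMap.ker g := by
    intro hle
    exact hker (Submodule.eq_of_le_of_finrank_eq hle (by omega))
  obtain ⟨x, hxg, hxf⟩ := Set.not_subset.1 hnotle
  obtain ⟨y, hyf, hyg⟩ := Set.not_subset.1 hnotle'
  simp only [SetLike.mem_coe, LinearMap.mem_ker] at hxg hxf hyf hyg
  -- span of f x is range f, span of g y is range g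
  have hspanf : Submodule.span F {f x} = LinearMap.range f := by
    apply Submodule.eq_of_le_of_finrank_eq
    · rw [Submodule.span_singleton_le_iff_mem]; exact ⟨x, rfl⟩
    · rw [finrank_span_singleton hxf, hrf]
  have hspang : Submodule.span F {g y} = LinearMap.range g := by
    apply Submodule.eq_of_le_of_finrank_eq
    · rw [Submodule.span_singleton_le_iff_mem]; exact ⟨y, rfl⟩
    · rw [finrank_span_singleton hyg, hrg]
  -- f x and g y are linearly independent
  have hind : LinearIndependent F ![f x, g y] := by
    rw [LinearIndependent.pair_iff]
    intro s t hst
    by_contra hc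
    rcases (not_and_or.1 hc) with hs | ht
    · have ht : t ≠ 0 := by
        intro h0; subst h0; simp at hst
        rcases hst with h | h
        exacts [hs h, hxf h]
      have : g y ∈ Submodule.span F {f x} := by
        have heq : t • g y = (-s) • f x := by
          rw [neg_smul, eq_neg_iff_add_eq_zero, add_comm]; exact hst
        have : g y = t⁻¹ • ((-s) • f x) := by rw [← heq, inv_smul_smul₀ ht]
        rw [this]
        exact Submodule.smul_mem _ _ (Submodule.smul_mem _ _ (Submodule.mem_span_singleton_self _))
      have hle : LinearMap.range g ≤ LinearMap.range f := by
        rw [← hspang, ← hspanf, Submodule.span_singleton_le_iff_mem]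
        exact this
      exact hran (Submodule.eq_of_le_of_finrank_eq hle (by omega)).symm
    · have hs : s ≠ 0 := by
        intro h0; subst h0
        simp only [zero_smul, zero_add, smul_eq_zero] at hst
        rcases hst with h | h
        exacts [ht h, hyg h]
      have : f x ∈ Submodule.span F {g y} := by
        have heq : s • f x = (-t) • g y := by
          rw [neg_smul, eq_neg_iff_add_eq_zero]; exact hst
        have : f x = s⁻¹ • ((-t) • g y) := by rw [← heq, inv_smul_smul₀ hs]
        rw [this]
        exact Submodule.smul_mem _ _ (Submodule.smul_mem _ _ (Submodule.mem_span_singleton_self _))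
      have hle : LinearMap.range f ≤ LinearMap.range g := by
        rw [← hspang, ← hspanf, Submodule.span_singleton_le_iff_mem]
        exact this
      exact hran (Submodule.eq_of_le_of_finrank_eq hle (by omega))
  -- now f + g has rank ≥ 2
  have hmem : ∀ i, (![f x, g y] i) ∈ LinearMap.range (f + g) := by
    intro i
    fin_cases i
    · exact ⟨x, by simp [hxg]⟩
    · exact ⟨y, by simp [hyf]⟩
  have h2 : 2 ≤ finrank F (LinearMap.range (f + g)) := by
    have hle : Submodule.span F (Set.range ![f x, g y]) ≤ LinearMap.range (f + g) := by
      rw [Submodule.span_le]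
      rintro v ⟨i, rfl⟩
      exact hmem i
    calc 2 = finrank F (Submodule.span F (Set.range ![f x, g y])) := by
            rw [finrank_span_eq_card hind]; simp
      _ ≤ finrank F (LinearMap.range (f + g)) := Submodule.finrank_mono hle
  have hfg : f + g ≠ 0 := by
    intro h0
    rw [h0, LinearMap.range_zero, finrank_bot] at h2
    omega
  have := finrank_range_eq_one hfg (hrk (f + g) (T.add_mem hfT hgT))
  omega

theorem stmt_17 {F V V' : Type*} [Field F]
    [AddCommGroup V] [Module F V] [FiniteDimensional F V]
    [AddCommGroup V'] [Module F V'] [FiniteDimensional F V']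
    (T : Submodule F (V →ₗ[F] V')) (hT : T ≠ ⊥)
    (hrk : ∀ f ∈ T, LinearMap.rank f ≤ 1) :
    (∀ f ∈ T, f ≠ 0 → ∀ g ∈ T, g ≠ 0 → LinearMap.ker f = LinearMap.ker g) ∨
    (∀ f ∈ T, f ≠ 0 → ∀ g ∈ T, g ≠ 0 → LinearMap.range f = LinearMap.range g) := by
  by_cases h : ∀ f ∈ T, f ≠ 0 → ∀ g ∈ T, g ≠ 0 → LinearMap.ker f = LinearMap.ker g
  · exact Or.inl h
  · right
    push_neg at h
    obtain ⟨f, hfT, hf, g, hgT, hg, hker⟩ := h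
    have hfgr : LinearMap.range f = LinearMap.range g :=
      key_range_eq T hrk hfT hf hgT hg hker
    have main : ∀ a ∈ T, a ≠ 0 → LinearMap.range a = LinearMap.range f := by
      intro a haT ha
      by_cases hk : LinearMap.ker a = LinearMap.ker f
      · have : LinearMap.ker a ≠ LinearMap.ker g := hk ▸ hker
        rw [key_range_eq T hrk haT ha hgT hg this, hfgr]
      · exact key_range_eq T hrk haT ha hfT hf hk
    intro a haT ha b hbT hb
    rw [main a haT ha, main b hbT hb]
end

section
/- Let F be an NRC field (the squaring map on F is not surjective) and let S be a weakly triangularizable linear subspace of End(V), where V is an n-dimensional F-vector space with n > 0. Then there exists a vector x ∈ V \ {0} such that S contains no nonzero operator with range Fx and trace zero. -/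
/-!
Suppose every nonzero `x` is the image line of some nonzero trace-zero `u_x ∈ S`. A rank-one
operator with image `F x` sends `x` to `tr(u_x) • x = 0`, so `H x := ker u_x` is a proper subspace
containing `x`. If `u_x y ≠ 0` and `u_y x ≠ 0`, a combination `w = u_x + d • u_y ∈ S` exchanges
the lines `F x` and `F y` with `w (w x) = c • x` for any prescribed `c`; since `w` is triangular
in some basis, `c` is then the square of a diagonal entry of its matrix. So, squaring not being
surjective, `y ∈ H x` or `x ∈ H y` for all nonzero `x, y`. No assignment of proper subspaces
`H x ∋ x` has this property: pick `v`; every `y ∉ H v` has `v ∈ H y`, so `H` descends to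
`V ⧸ F v` away from the proper subspace given by `H v`, and induction on the dimension applies
once a subspace `P` to be avoided is built into the statement.
-/

section Trace

open LinearMap Submodule

variable {F V : Type*} [Field F] [AddCommGroup V] [Module F V]

theorem LinearMap.exists_eq_smulRight_of_range_le_span_singleton {u : Module.End F V} {x : V}
    (hx : x ≠ 0) (h : range u ≤ F ∙ x) : ∃ f : V →ₗ[F] F, u = f.smulRight x := by
  refine ⟨LinearEquiv.coord F V x hx ∘ₗ u.codRestrict _ fun v => h ⟨v, rfl⟩, ?_⟩
  ext v
  simp

theorem LinearMap.apply_self_eq_trace_smul [FiniteDimensional F V] {u : Module.End F V} {x : V}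
    (hx : x ≠ 0) (h : range u ≤ F ∙ x) : u x = trace F V u • x := by
  obtain ⟨f, rfl⟩ := exists_eq_smulRight_of_range_le_span_singleton hx h
  rw [trace_smulRight, smulRight_apply]

end Trace

theorem Matrix.IsUpperTriangular.diag_mul {ι R : Type*} [Fintype ι] [LinearOrder ι] [Semiring R]
    {M N : Matrix ι ι R} (hM : M.IsUpperTriangular) (hN : N.IsUpperTriangular) (i : ι) :
    (M * N) i i = M i i * N i i := by
  rw [Matrix.mul_apply, Finset.sum_eq_single i]
  · intro j _ hj
    rcases hj.lt_or_gt with h | h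
    · rw [hM h, zero_mul]
    · rw [hN h, mul_zero]
  · simp

section Triangular

open Module LinearMap

variable {F V ι : Type*} [Field F] [AddCommGroup V] [Module F V]
  [Fintype ι] [DecidableEq ι] [LinearOrder ι]

theorem exists_sq_eq_of_apply_apply_eq_smul {b : Basis ι F V} {w : Module.End F V}
    (hw : (toMatrix b b w).IsUpperTriangular) {x : V} (hx : x ≠ 0) {c : F}
    (h : w (w x) = c • x) : ∃ s : F, s ^ 2 = c := by
  set M := toMatrix b b w
  have hdet : (M * M - c • 1).det = 0 := by
    refine Matrix.exists_mulVec_eq_zero_iff.mp ⟨b.repr x, by simpa using hx, ?_⟩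
    rw [show M * M - c • 1 = toMatrix b b (w * w - c • 1) by simp [M, toMatrix_mul],
      toMatrix_mulVec_repr]
    simp [h]
  have hc1 : (c • 1 : Matrix ι ι F).IsUpperTriangular :=
    Matrix.smul_one_eq_diagonal (m := ι) c ▸ Matrix.blockTriangular_diagonal _
  rw [Matrix.det_of_isUpperTriangular ((hw.mul hw).sub hc1)] at hdet
  obtain ⟨i, -, hi⟩ := Finset.prod_eq_zero_iff.mp hdet
  refine ⟨M i i, ?_⟩
  rw [Matrix.sub_apply, hw.diag_mul hw] at hi
  simpa [sq, sub_eq_zero] using hi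

theorem surjective_sq_of_swapping_pair {S : Submodule F (Module.End F V)}
    (hS : ∀ w ∈ S, ∃ b : Basis ι F V, (toMatrix b b w).IsUpperTriangular)
    {u v : Module.End F V} (hu : u ∈ S) (hv : v ∈ S) {x y : V} (hx : x ≠ 0)
    (hux : u x = 0) (hvy : v y = 0) {a b : F} (ha : a ≠ 0) (hb : b ≠ 0)
    (huy : u y = a • x) (hvx : v x = b • y) :
    Function.Surjective fun s : F => s ^ 2 := by
  intro c
  set w := u + (c / (a * b)) • v
  have hwx : w x = (c / (a * b) * b) • y := by simp [w, hux, hvx, smul_smul]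
  have hwy : w y = a • x := by simp [w, hvy, huy]
  have hw : w (w x) = c • x := by
    rw [hwx, map_smul, hwy, smul_smul]
    congr 1
    field_simp
  obtain ⟨β, hβ⟩ := hS w (S.add_mem hu (S.smul_mem _ hv))
  exact exists_sq_eq_of_apply_apply_eq_smul hβ hx hw

end Triangular

section Hyperplanes

open Module Submodule

variable {F : Type*} [Field F]

theorem Submodule.exists_notMem_mkQ_span_singleton_eq {V : Type*} [AddCommGroup V] [Module F V]
    {P : Submodule F V} {v : V} (hv : v ∉ P) (w : V ⧸ F ∙ v) :
    ∃ y ∉ P, (F ∙ v).mkQ y = w := by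
  obtain ⟨y, rfl⟩ := (F ∙ v).mkQ_surjective w
  by_cases hy : y ∈ P
  · refine ⟨y + v, fun h => hv ?_, ?_⟩
    · simpa using P.sub_mem h hy
    · simp [(Submodule.Quotient.mk_eq_zero _).mpr (mem_span_singleton_self v)]
  · exact ⟨y, hy, rfl⟩

theorem Submodule.exists_notMem_apply_and_notMem_apply {V : Type*} [AddCommGroup V]
    [Module F V] [FiniteDimensional F V] {P : Submodule F V} (hP : P ≠ ⊤)
    (H : V → Submodule F V) (hmem : ∀ x ∉ P, x ∈ H x) (hne : ∀ x ∉ P, H x ≠ ⊤) :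
    ∃ x ∉ P, ∃ y ∉ P, y ∉ H x ∧ x ∉ H y := by
  obtain ⟨n, hn⟩ : ∃ n, finrank F V = n := ⟨_, rfl⟩
  induction n generalizing V with
  | zero =>
    have : Subsingleton V := finrank_zero_iff.mp hn
    exact absurd (Subsingleton.elim P ⊤) hP
  | succ n ih =>
    by_contra! hpair
    obtain ⟨v, hv⟩ : ∃ v, v ∉ P := by simpa [eq_top_iff'] using hP
    have hv0 : v ≠ 0 := fun h => hv (h ▸ P.zero_mem)
    have hquot : finrank F (V ⧸ F ∙ v) = n := by
      have := (F ∙ v).finrank_quotient_add_finrank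
      rw [finrank_span_singleton hv0] at this
      omega
    set π := (F ∙ v).mkQ
    have map_ne_top : ∀ x ∉ P, v ∈ H x → (H x).map π ≠ ⊤ := by
      intro x hx hvx h
      rw [map_mkQ_eq_top, sup_eq_right.mpr ((span_singleton_le_iff_mem _ _).mpr hvx)] at h
      exact hne x hx h
    choose r hrP hr using exists_notMem_mkQ_span_singleton_eq (F := F) hv
    have mem_map_of_mem_apply : ∀ w x, r w ∈ H x → w ∈ (H x).map π :=
      fun w x h => hr w ▸ mem_map_of_mem h
    have hvr : ∀ w ∉ (H v).map π, v ∈ H (r w) := fun w hw =>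
      hpair v hv (r w) (hrP w) fun h => hw (mem_map_of_mem_apply w v h)
    obtain ⟨w, -, w', -, hw'w, hww'⟩ := ih (map_ne_top v hv (hmem v hv))
      (fun w => (H (r w)).map π) (fun w _ => mem_map_of_mem_apply w _ (hmem _ (hrP w)))
      (fun w hw => map_ne_top _ (hrP w) (hvr w hw)) hquot
    exact hww' (mem_map_of_mem_apply w (r w')
      (hpair (r w) (hrP w) (r w') (hrP w') fun h => hw'w (mem_map_of_mem_apply w' (r w) h)))

end Hyperplanes

theorem stmt_18 {F V : Type*} [Field F] [AddCommGroup V] [Module F V]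
    [FiniteDimensional F V] {n : ℕ} (hn : 0 < n)
    (hdim : Module.finrank F V = n)
    (hNRC : ¬ Function.Surjective fun x : F => x ^ 2)
    (S : Submodule F (Module.End F V))
    (hS : ∀ u ∈ S, ∃ b : Module.Basis (Fin n) F V,
      ((LinearMap.toMatrix b b) u).BlockTriangular id) :
    ∃ x : V, x ≠ 0 ∧ ∀ u ∈ S,
      ¬ (LinearMap.trace F V u = 0 ∧ u ≠ 0 ∧
        LinearMap.range u = Submodule.span F {x}) := by
  have : Nontrivial V := Module.nontrivial_of_finrank_pos (R := F) (hdim ▸ hn)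
  by_contra! hcon
  choose! U hUS hUtr hU0 hUrange using hcon
  have hUself : ∀ x ≠ 0, U x x = 0 := fun x hx => by
    rw [LinearMap.apply_self_eq_trace_smul hx (hUrange x hx).le, hUtr x hx, zero_smul]
  obtain ⟨x, hx, y, hy, hyx, hxy⟩ := (⊥ : Submodule F V).exists_notMem_apply_and_notMem_apply
    bot_ne_top (fun x => LinearMap.ker (U x)) (fun x hx => hUself x (by simpa using hx))
    (fun x hx => by simpa [LinearMap.ker_eq_top] using hU0 x (by simpa using hx))
  rw [Submodule.mem_bot] at hx hy
  obtain ⟨a, ha⟩ := Submodule.mem_span_singleton.mp ((hUrange x hx).le ⟨y, rfl⟩)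
  obtain ⟨b, hb⟩ := Submodule.mem_span_singleton.mp ((hUrange y hy).le ⟨x, rfl⟩)
  refine hNRC (surjective_sq_of_swapping_pair hS (hUS x hx) (hUS y hy) hx (hUself x hx)
    (hUself y hy) ?_ ?_ ha.symm hb.symm)
  · rintro rfl
    exact hyx (by simp [← ha])
  · rintro rfl
    exact hxy (by simp [← hb])
end
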